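/- arXiv:1511.03213 — 5 statements merged into one kernel-verified Lean document; each statement's English description precedes it below -/
import Mathlib

section
/- Let D₁ and D₂ be valid dependence relations on the same transition system such that: (H1) any two transitions executed on different threads that are D₁-independent are also D₂-independent; and (H2) for any two transition sequences from the same state that are Mazurkiewicz-equivalent w.r.t. D₁, every pair of D₂-dependent transitions occurring in them occurs in the same relative order in both. If P is a persistent set at a state s w.r.t. D₁, then P is a dependence-covering set at s w.r.t. D₂. -/
/-- An event-driven multi-threaded program, modeled abstractly as a
transition system. -/
structure Sys (S T R : Type) where
  thread : R → T
  next : S → T → Option R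
  enabled : R → S → Prop
  step : R → S → S
  next_thread : ∀ {s t r}, next s t = some r → thread r = t
  enabled_next : ∀ {r s}, enabled r s → next s (thread r) = some r

namespace Sys

variable {S T R : Type}

/-- `r` belongs to `nextTrans s`: it is the next transition of its thread at `s`. -/
def inNext (M : Sys S T R) (s : S) (r : R) : Prop :=
  M.next s (M.thread r) = some r

/-- `r` is blocked at `s`. -/
def blockedAt (M : Sys S T R) (s : S) (r : R) : Prop :=
  M.inNext s r ∧ ¬ M.enabled r s

/-- `Seq M s w s'`: `w` is a transition sequence from `s` ending at `s'`. -/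
inductive Seq (M : Sys S T R) : S → List R → S → Prop
  | nil (s : S) : Seq M s [] s
  | cons {s : S} {r : R} {w : List R} {s'' : S} :
      M.enabled r s → Seq M (M.step r s) w s'' → Seq M s (r :: w) s''

def Reachable (M : Sys S T R) (s s' : S) : Prop :=
  ∃ w, M.Seq s w s'

/-- Well-formedness of the system: no transition occurs twice in a transition
sequence, and a transition that has been executed never again belongs to
`nextTrans` at a later state of that sequence. -/
def Wf (M : Sys S T R) : Prop :=
  ∀ s w s', M.Seq s w s' → w.Nodup ∧ ∀ r ∈ w, ¬ M.inNext s' r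

/-- `D` is a valid dependence relation. -/
def ValidDep (M : Sys S T R) (D : R → R → Prop) : Prop :=
  (∀ r, D r r) ∧ (∀ a b, D a b → D b a) ∧
  ∀ r₁ r₂, ¬ D r₁ r₂ → ∀ s, M.enabled r₁ s →
    (M.inNext s r₂ ↔ M.inNext (M.step r₁ s) r₂) ∧
    (M.enabled r₂ s ↔ M.enabled r₂ (M.step r₁ s)) ∧
    (M.enabled r₂ s → M.step r₂ (M.step r₁ s) = M.step r₁ (M.step r₂ s))

/-- `u` (a transition sequence from `s` ending at `sm`) is a dependence-covering
sequence of `w` (a transition sequence from `s` ending at `sn`). -/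
def DepCovering (M : Sys S T R) (D : R → R → Prop)
    (s : S) (w : List R) (sn : S) (u : List R) (sm : S) : Prop :=
  M.Seq s w sn ∧ M.Seq s u sm ∧ (∀ r ∈ w, r ∈ u) ∧
  ∀ a b, D a b → List.Sublist [a, b] u →
    (List.Sublist [a, b] w) ∨
    (a ∈ w ∧ M.inNext sn b) ∨
    (a ∉ w ∧ M.inNext sn b ∧ ∃ ext s', M.Seq sn ext s' ∧ List.Sublist [a, b] ext) ∨
    (b ∉ w ∧ ¬ M.inNext sn b)

/-- `L` is a dependence-covering set at `s`. -/
def DepCovSet (M : Sys S T R) (D : R → R → Prop) (s : S) (L : Set R) : Prop :=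
  L.Nonempty ∧ (∀ r ∈ L, M.enabled r s) ∧
  ∀ w sn, M.Seq s w sn → w ≠ [] →
    ∃ r u' sm, r ∈ L ∧ M.DepCovering D s w sn (r :: u') sm

/-- `⟨DC, ρ⟩` is a deadlock cycle at state `s`. -/
def IsDeadlockCycle (M : Sys S T R) {n : ℕ} (DC : Set R) (ρ : ZMod n → R) (s : S) : Prop :=
  0 < n ∧ Function.Injective ρ ∧ Set.range ρ = DC ∧
  (∀ r ∈ DC, M.blockedAt s r) ∧
  ∀ (i : ZMod n) (s' : S), M.Reachable s s' → M.blockedAt s' (ρ i) →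
    ∀ r, M.enabled r s' → M.enabled (ρ i) (M.step r s') →
      M.thread r = M.thread (ρ (i + 1))

end Sys

namespace Sys

variable {S T R : Type}

/-- One swap of two adjacent independent transitions, both the original and the
swapped list being transition sequences from `s`. -/
inductive MazStep (M : Sys S T R) (D : R → R → Prop) (s : S) : List R → List R → Prop
  | mk {w₁ w₂ : List R} {a b : R} {sn sm : S} :
      ¬ D a b →
      M.Seq s (w₁ ++ a :: b :: w₂) sn →
      M.Seq s (w₁ ++ b :: a :: w₂) sm →
      MazStep M D s (w₁ ++ a :: b :: w₂) (w₁ ++ b :: a :: w₂)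

/-- Mazurkiewicz equivalence w.r.t. a dependence relation `D`: finitely many
swaps of adjacent `D`-independent transitions, each intermediate list again
being a transition sequence from `s`. -/
def MazEq (M : Sys S T R) (D : R → R → Prop) (s : S) : List R → List R → Prop :=
  Relation.ReflTransGen (MazStep M D s)

/-- `P` is a persistent set at `s` w.r.t. `D`. -/
def PersistentSet (M : Sys S T R) (D : R → R → Prop) (s : S) (P : Set R) : Prop :=
  P.Nonempty ∧ (∀ r ∈ P, M.enabled r s) ∧
  ∀ w sn, M.Seq s w sn → (∀ r ∈ w, r ∉ P) → ∀ r ∈ w, ∀ p ∈ P, ¬ D r p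

end Sys

/-!
Let `p` be the first transition of `w` that lies in `P`, or, if `w` avoids `P`, any `p ∈ P`
appended after `w` (persistence keeps it enabled along `w`). Every transition before `p` is
`D₁`-independent of `p`, so `p` can be swapped to the front; the resulting sequence starts in `P`
and is Mazurkiewicz-equivalent to `w` (or to `w ++ [p]`). By (H2) it orders every `D₂`-dependent
pair as `w` does, except pairs ending in the appended `p`, which lies in `nextTrans (last w)`.
-/

theorem List.pair_sublist_append_singleton {α : Type*} {a b c : α} {l : List α}
    (h : List.Sublist [a, b] (l ++ [c])) : List.Sublist [a, b] l ∨ a ∈ l ∧ b = c := by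
  obtain ⟨l₁, l₂, hab, h₁, h₂⟩ := List.sublist_append_iff.mp h
  rcases List.sublist_singleton.mp h₂ with rfl | rfl
  · simp_all
  · rcases l₁ with _ | ⟨x, _ | ⟨y, l₁⟩⟩ <;> simp_all

theorem List.exists_eq_append_cons_of_exists {α : Type*} {q : α → Prop} {l : List α}
    (h : ∃ x ∈ l, q x) : ∃ l₁ a l₂, l = l₁ ++ a :: l₂ ∧ q a ∧ ∀ x ∈ l₁, ¬ q x := by
  classical
  obtain ⟨a, ha⟩ := Option.isSome_iff_exists.mp
    (List.find?_isSome (xs := l) (p := (q ·)) |>.mpr (by simpa using h))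
  obtain ⟨hqa, l₁, l₂, rfl, hl₁⟩ := List.find?_eq_some_iff_append.mp ha
  exact ⟨l₁, a, l₂, rfl, by simpa using hqa, by simpa using hl₁⟩

namespace Sys

variable {S T R : Type} {M : Sys S T R} {D : R → R → Prop} {s s' s'' : S} {p r : R}
  {v w : List R}

theorem Seq.append (h₁ : M.Seq s v s') (h₂ : M.Seq s' w s'') : M.Seq s (v ++ w) s'' := by
  induction h₁ with
  | nil => exact h₂
  | cons hr _ ih => exact .cons hr (ih h₂)

theorem Seq.exists_of_append (h : M.Seq s (v ++ w) s'') :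
    ∃ s', M.Seq s v s' ∧ M.Seq s' w s'' := by
  induction v generalizing s with
  | nil => exact ⟨s, .nil s, h⟩
  | cons r v ih =>
    obtain _ | ⟨hr, h⟩ := h
    obtain ⟨s', hv, hw⟩ := ih h
    exact ⟨s', .cons hr hv, hw⟩

theorem ValidDep.enabled_of_seq (hD : M.ValidDep D) (hp : M.enabled p s) (hw : M.Seq s w s')
    (hind : ∀ r ∈ w, ¬ D r p) : M.enabled p s' := by
  induction hw with
  | nil => exact hp
  | cons hr _ ih =>
    exact ih ((hD.2.2 _ _ (hind _ List.mem_cons_self) _ hr).2.1.mp hp)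
      fun r hr => hind r (List.mem_cons_of_mem _ hr)

theorem ValidDep.seq_swap (hD : M.ValidDep D) (hrp : ¬ D r p) (h : M.Seq s (r :: p :: w) s') :
    M.Seq s (p :: r :: w) s' := by
  obtain _ | ⟨hr, _ | ⟨hp, hw⟩⟩ := h
  obtain ⟨-, hp_iff, hcomm⟩ := hD.2.2 r p hrp s hr
  have hp : M.enabled p s := hp_iff.mpr hp
  have hr' : M.enabled r (M.step p s) :=
    (hD.2.2 p r (fun hpr => hrp (hD.2.1 p r hpr)) s hp).2.1.mp hr
  rw [hcomm hp] at hw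
  exact .cons hp (.cons hr' hw)

theorem MazStep.cons (hr : M.enabled r s) (h : M.MazStep D (M.step r s) v w) :
    M.MazStep D s (r :: v) (r :: w) := by
  obtain ⟨hab, hv, hw⟩ := h
  exact MazStep.mk (w₁ := r :: _) hab (.cons hr hv) (.cons hr hw)

theorem MazEq.cons (hr : M.enabled r s) (h : M.MazEq D (M.step r s) v w) :
    M.MazEq D s (r :: v) (r :: w) :=
  Relation.ReflTransGen.lift (r :: ·) (fun _ _ => MazStep.cons hr) _ _ h

theorem ValidDep.mazEq_move_front (hD : M.ValidDep D) (h : M.Seq s (v ++ p :: w) s')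
    (hp : M.enabled p s) (hind : ∀ r ∈ v, ¬ D r p) :
    M.Seq s (p :: (v ++ w)) s' ∧ M.MazEq D s (p :: (v ++ w)) (v ++ p :: w) := by
  induction v generalizing s with
  | nil => exact ⟨h, .refl⟩
  | cons r v ih =>
    obtain _ | ⟨hr, h⟩ := h
    have hrp : ¬ D r p := hind r List.mem_cons_self
    obtain ⟨hseq, hmaz⟩ := ih h ((hD.2.2 r p hrp s hr).2.1.mp hp)
      fun r' hr' => hind r' (List.mem_cons_of_mem _ hr')
    have hswap : M.Seq s (p :: r :: (v ++ w)) s' := hD.seq_swap hrp (.cons hr hseq)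
    have hstep : M.MazStep D s (p :: r :: (v ++ w)) (r :: p :: (v ++ w)) :=
      MazStep.mk (w₁ := []) (fun hpr => hrp (hD.2.1 p r hpr)) hswap (.cons hr hseq)
    exact ⟨hswap, .head hstep (hmaz.cons hr)⟩

theorem PersistentSet.mazEq_cons_of_first_mem {P : Set R} (hD : M.ValidDep D)
    (hP : M.PersistentSet D s P) (h : M.Seq s (v ++ p :: w) s') (hp : p ∈ P)
    (hv : ∀ r ∈ v, r ∉ P) :
    M.Seq s (p :: (v ++ w)) s' ∧ M.MazEq D s (p :: (v ++ w)) (v ++ p :: w) := by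
  obtain ⟨s₁, hseq, -⟩ := h.exists_of_append
  exact hD.mazEq_move_front h (hP.2.1 p hp) fun r hr => hP.2.2 v s₁ hseq hv r hr p hp

theorem PersistentSet.mazEq_cons_of_disjoint {P : Set R} (hD : M.ValidDep D)
    (hP : M.PersistentSet D s P) (h : M.Seq s w s') (hp : p ∈ P) (hw : ∀ r ∈ w, r ∉ P) :
    M.enabled p s' ∧ M.Seq s (p :: w) (M.step p s') ∧ M.MazEq D s (p :: w) (w ++ [p]) := by
  have hind : ∀ r ∈ w, ¬ D r p := fun r hr => hP.2.2 w s' h hw r hr p hp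
  have hp' : M.enabled p s' := hD.enabled_of_seq (hP.2.1 p hp) h hind
  have happ : M.Seq s (w ++ [p]) (M.step p s') := h.append (.cons hp' (.nil _))
  obtain ⟨hu, hmaz⟩ := hD.mazEq_move_front happ (hP.2.1 p hp) hind
  rw [List.append_nil] at hu hmaz
  exact ⟨hp', hu, hmaz⟩

end Sys

theorem persistentSet_is_dependence_covering_set_general
    {S T R : Type} (M : Sys S T R) (D₁ D₂ : R → R → Prop)
    (h₁ : M.ValidDep D₁)
    (H2 : ∀ s w v, Sys.MazEq M D₁ s w v →
      ∀ a b, D₂ a b → List.Sublist [a, b] w → List.Sublist [a, b] v)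
    {s : S} {P : Set R} (hP : Sys.PersistentSet M D₁ s P) :
    M.DepCovSet D₂ s P := by
  refine ⟨hP.1, hP.2.1, fun w sn hw _ => ?_⟩
  by_cases hwP : ∃ r ∈ w, r ∈ P
  · obtain ⟨v, p, w₂, rfl, hp, hv⟩ := List.exists_eq_append_cons_of_exists hwP
    obtain ⟨hu, hmaz⟩ := hP.mazEq_cons_of_first_mem h₁ hw hp hv
    refine ⟨p, v ++ w₂, sn, hp, hw, hu, fun r hr => ?_, fun a b hab hsub => ?_⟩
    · simp only [List.mem_append, List.mem_cons] at hr ⊢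
      tauto
    · exact Or.inl (H2 s _ _ hmaz a b hab hsub)
  · push Not at hwP
    obtain ⟨p, hp⟩ := hP.1
    obtain ⟨hen, hu, hmaz⟩ := hP.mazEq_cons_of_disjoint h₁ hw hp hwP
    refine ⟨p, w, _, hp, hw, hu, fun r hr => List.mem_cons_of_mem _ hr, fun a b hab hsub => ?_⟩
    rcases List.pair_sublist_append_singleton (H2 s _ _ hmaz a b hab hsub) with h | ⟨ha, rfl⟩
    · exact Or.inl h
    · exact Or.inr (Or.inl ⟨ha, M.enabled_next hen⟩)

/-- A persistent set w.r.t. `D₁` is a dependence-covering set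
w.r.t. `D₂`, under the hypotheses (H1) and (H2) relating `D₁` and `D₂`. -/
theorem persistentSet_is_dependence_covering_set
    {S T R : Type} (M : Sys S T R) (D₁ D₂ : R → R → Prop)
    (h₁ : M.ValidDep D₁) (h₂ : M.ValidDep D₂) (hwf : M.Wf)
    (H1 : ∀ a b, M.thread a ≠ M.thread b → ¬ D₁ a b → ¬ D₂ a b)
    (H2 : ∀ s w v, Sys.MazEq M D₁ s w v →
      ∀ a b, D₂ a b → List.Sublist [a, b] w → List.Sublist [a, b] v)
    {s : S} {P : Set R} (hP : Sys.PersistentSet M D₁ s P) :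
    M.DepCovSet D₂ s P :=
  persistentSet_is_dependence_covering_set_general M D₁ D₂ h₁ H2 hP
end

section
/- Let D be a valid dependence relation, let w = r₁⋯r_n be a transition sequence from a state s with last state s_n, and let p be a transition enabled at s that is independent of r_i for every i. Then: (a) no r_i executes on the thread of p; (b) w is a transition sequence from step p s whose last state equals step p s_n; and (c) the list p, r₁, …, r_n is a transition sequence from s and is a dependence-covering sequence of w from s. -/
namespace Sys

variable {S T R : Type} {M : Sys S T R} {D : R → R → Prop}

theorem eq_of_enabled_of_thread_eq {s : S} {r₁ r₂ : R} (h₁ : M.enabled r₁ s)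
    (h₂ : M.enabled r₂ s) (ht : M.thread r₁ = M.thread r₂) : r₁ = r₂ := by
  have h := M.enabled_next h₁
  rwa [ht, M.enabled_next h₂, Option.some_inj, eq_comm] at h

namespace ValidDep

theorem not_dep_symm (hD : M.ValidDep D) {a b : R} (h : ¬ D a b) : ¬ D b a :=
  fun h' => h (hD.2.1 b a h')

theorem enabled_step_iff (hD : M.ValidDep D) {r₁ r₂ : R} (h : ¬ D r₁ r₂) {s : S}
    (h₁ : M.enabled r₁ s) : M.enabled r₂ (M.step r₁ s) ↔ M.enabled r₂ s :=
  ((hD.2.2 r₁ r₂ h s h₁).2.1).symm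

theorem step_comm (hD : M.ValidDep D) {r₁ r₂ : R} (h : ¬ D r₁ r₂) {s : S}
    (h₁ : M.enabled r₁ s) (h₂ : M.enabled r₂ s) :
    M.step r₂ (M.step r₁ s) = M.step r₁ (M.step r₂ s) :=
  (hD.2.2 r₁ r₂ h s h₁).2.2 h₂

theorem thread_ne (hD : M.ValidDep D) {r₁ r₂ : R} (h : ¬ D r₁ r₂) {s : S}
    (h₁ : M.enabled r₁ s) (h₂ : M.enabled r₂ s) : M.thread r₁ ≠ M.thread r₂ := by
  intro ht
  obtain rfl := eq_of_enabled_of_thread_eq h₁ h₂ ht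
  exact h (hD.1 r₁)

end ValidDep

namespace Seq

theorem thread_ne_of_indep (hD : M.ValidDep D) {s sn : S} {w : List R} (hw : M.Seq s w sn)
    {p : R} (hp : M.enabled p s) (hindep : ∀ r ∈ w, ¬ D p r) :
    ∀ r ∈ w, M.thread r ≠ M.thread p := by
  induction hw with
  | nil => simp
  | @cons s r w _ hr _ ih =>
    have hpr : ¬ D p r := hindep r List.mem_cons_self
    have hp' : M.enabled p (M.step r s) := (hD.enabled_step_iff (hD.not_dep_symm hpr) hr).2 hp
    rintro a (_ | ⟨_, ha⟩)
    · exact (hD.thread_ne hpr hp hr).symm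
    · exact ih hp' (fun b hb => hindep b (List.mem_cons_of_mem r hb)) a ha

theorem step_of_indep (hD : M.ValidDep D) {s sn : S} {w : List R} (hw : M.Seq s w sn)
    {p : R} (hp : M.enabled p s) (hindep : ∀ r ∈ w, ¬ D p r) :
    M.Seq (M.step p s) w (M.step p sn) := by
  induction hw with
  | nil => exact .nil _
  | @cons s r w _ hr _ ih =>
    have hpr : ¬ D p r := hindep r List.mem_cons_self
    have hp' : M.enabled p (M.step r s) := (hD.enabled_step_iff (hD.not_dep_symm hpr) hr).2 hp
    have hr' : M.enabled r (M.step p s) := (hD.enabled_step_iff hpr hp).2 hr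
    refine .cons hr' ?_
    rw [hD.step_comm hpr hp hr]
    exact ih hp' (fun b hb => hindep b (List.mem_cons_of_mem r hb))

end Seq

/-- Any dependent pair of `p :: w` in this order lies in `w` or starts with `p`; the latter is
excluded by independence. -/
theorem depCovering_cons_of_indep {s sn sm : S} {w : List R} {p : R} (hw : M.Seq s w sn)
    (hpw : M.Seq s (p :: w) sm) (hindep : ∀ r ∈ w, ¬ D p r) :
    M.DepCovering D s w sn (p :: w) sm := by
  refine ⟨hw, hpw, fun r hr => List.mem_cons_of_mem p hr, fun a b hab hsub => ?_⟩
  cases hsub with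
  | cons _ h => exact Or.inl h
  | cons_cons _ h => exact absurd hab (hindep b (List.singleton_sublist.mp h))

end Sys

theorem indep_transition_prepend_general
    {S T R : Type} (M : Sys S T R) (D : R → R → Prop)
    (hD : M.ValidDep D)
    {s sn : S} {w : List R} (hw : M.Seq s w sn)
    {p : R} (hp : M.enabled p s) (hindep : ∀ r ∈ w, ¬ D p r) :
    (∀ r ∈ w, M.thread r ≠ M.thread p) ∧
    M.Seq (M.step p s) w (M.step p sn) ∧
    M.Seq s (p :: w) (M.step p sn) ∧
    M.DepCovering D s w sn (p :: w) (M.step p sn) := by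
  have hstep := hw.step_of_indep hD hp hindep
  have hcons : M.Seq s (p :: w) (M.step p sn) := .cons hp hstep
  exact ⟨hw.thread_ne_of_indep hD hp hindep, hstep, hcons,
    Sys.depCovering_cons_of_indep hw hcons hindep⟩

/-- If `p` is enabled at `s` and independent of every
transition of a transition sequence `w` from `s`, then (a) no transition of `w`
executes on the thread of `p`, (b) `w` is a transition sequence from
`step p s` ending at `step p (last w)`, and (c) `p :: w` is a transition
sequence from `s` and a dependence-covering sequence of `w` from `s`. -/
theorem indep_transition_prepend
    {S T R : Type} (M : Sys S T R) (D : R → R → Prop)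
    (hD : M.ValidDep D) (hwf : M.Wf)
    {s sn : S} {w : List R} (hw : M.Seq s w sn)
    {p : R} (hp : M.enabled p s) (hindep : ∀ r ∈ w, ¬ D p r) :
    (∀ r ∈ w, M.thread r ≠ M.thread p) ∧
    M.Seq (M.step p s) w (M.step p sn) ∧
    M.Seq s (p :: w) (M.step p sn) ∧
    M.DepCovering D s w sn (p :: w) (M.step p sn) :=
  indep_transition_prepend_general M D hD hw hp hindep
end

section
/- Let D be a valid dependence relation and let w = r₁⋯r_n be a transition sequence from a state s. Suppose 1 ≤ k ≤ n and r_k is independent of r_i for every i < k. Then the list u = r_k, r₁, …, r_{k−1}, r_{k+1}, …, r_n is a transition sequence from s, last u = last w, and u is a dependence-covering sequence of w from s. -/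
/-! The independent transition `rk` is bubbled to the front by adjacent swaps, each of which
preserves enabledness and the reached state by validity of `D`. The only pairs whose order
changes are `(r, rk)` with `r` earlier in `w`, and these are independent, so every dependent
pair of the new order already occurs in that order in `w`. -/

theorem List.pair_sublist_append_cons_of_sublist_cons_append {α : Type*} {a b x : α}
    {l₁ l₂ : List α} (h : List.Sublist [a, b] (x :: (l₁ ++ l₂))) (hb : a = x → b ∉ l₁) :
    List.Sublist [a, b] (l₁ ++ x :: l₂) := by
  cases h with
  | cons _ h => exact h.trans (List.sublist_cons_self x l₂ |>.append_left l₁)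
  | cons_cons _ h =>
    have hb₂ : b ∈ l₂ := (List.mem_append.mp (List.singleton_sublist.mp h)).resolve_left (hb rfl)
    exact (List.singleton_sublist.mpr hb₂).cons_cons _ |>.trans (List.sublist_append_right l₁ _)

namespace Sys.Seq

variable {S T R : Type} {M : Sys S T R} {D : R → R → Prop}

theorem swap_of_not_dep (hD : M.ValidDep D) {s s' : S} {a b : R} {w : List R}
    (hab : ¬ D a b) (h : M.Seq s (a :: b :: w) s') : M.Seq s (b :: a :: w) s' := by
  obtain ⟨-, hsymm, hvalid⟩ := hD
  rcases h with _ | ⟨ha, _ | ⟨hb_after, hw⟩⟩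
  have hb : M.enabled b s := (hvalid a b hab s ha).2.1.mpr hb_after
  have ha' : M.enabled a (M.step b s) :=
    (hvalid b a (fun h => hab (hsymm b a h)) s hb).2.1.mp ha
  rw [(hvalid a b hab s ha).2.2 hb] at hw
  exact .cons hb (.cons ha' hw)

theorem move_to_front (hD : M.ValidDep D) {s s' : S} {w₁ w₂ : List R} {x : R}
    (hind : ∀ r ∈ w₁, ¬ D x r) (h : M.Seq s (w₁ ++ x :: w₂) s') :
    M.Seq s (x :: (w₁ ++ w₂)) s' := by
  induction w₁ generalizing s with
  | nil => exact h
  | cons r w₁ ih =>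
    rcases h with _ | ⟨hr, hw⟩
    have hfront := ih (fun r' hr' => hind r' (List.mem_cons_of_mem r hr')) hw
    exact swap_of_not_dep hD (fun h => hind r List.mem_cons_self (hD.2.1 r x h)) (.cons hr hfront)

end Sys.Seq

theorem move_indep_transition_to_front_general
    {S T R : Type} (M : Sys S T R) (D : R → R → Prop)
    (hD : M.ValidDep D)
    {s sn : S} {w₁ w₂ : List R} {rk : R}
    (hw : M.Seq s (w₁ ++ rk :: w₂) sn)
    (hind : ∀ r ∈ w₁, ¬ D rk r) :
    M.Seq s (rk :: (w₁ ++ w₂)) sn ∧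
    M.DepCovering D s (w₁ ++ rk :: w₂) sn (rk :: (w₁ ++ w₂)) sn := by
  have hu := hw.move_to_front hD hind
  refine ⟨hu, hw, hu, fun r hr => List.perm_middle.subset hr, fun a b hab hsub => Or.inl ?_⟩
  exact List.pair_sublist_append_cons_of_sublist_cons_append hsub
    fun ha hb => hind b hb (ha ▸ hab)

/-- If the `k`-th transition `rk` of a transition sequence
`w = w₁ ++ rk :: w₂` from `s` is independent of every earlier transition, then
`rk :: (w₁ ++ w₂)` is a transition sequence from `s` with the same last state,
and it is a dependence-covering sequence of `w` from `s`. -/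
theorem move_indep_transition_to_front
    {S T R : Type} (M : Sys S T R) (D : R → R → Prop)
    (hD : M.ValidDep D) (hwf : M.Wf)
    {s sn : S} {w₁ w₂ : List R} {rk : R}
    (hw : M.Seq s (w₁ ++ rk :: w₂) sn)
    (hind : ∀ r ∈ w₁, ¬ D rk r) :
    M.Seq s (rk :: (w₁ ++ w₂)) sn ∧
    M.DepCovering D s (w₁ ++ rk :: w₂) sn (rk :: (w₁ ++ w₂)) sn :=
  move_indep_transition_to_front_general M D hD hw hind
end

section
/- Let D be a valid dependence relation, let α be an assertion over local variables with violation predicate Viol, and let w be a transition sequence from a state s whose last state s_n satisfies Viol s_n. Let u be a dependence-covering sequence of w from s such that every transition occurring in u but not in w is independent of α. Then some prefix of u reaches a state v' with Viol v'. -/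
namespace Sys

variable {S T R : Type}

/-- An assertion over local variables, modeled by a transition `α` together
with a violation predicate `Viol`. -/
def IsAssertion (M : Sys S T R) (D : R → R → Prop) (α : R) (Viol : S → Prop) : Prop :=
  (∀ s, Viol s → M.enabled α s) ∧
  ∀ r s, ¬ D r α → M.enabled r s → (Viol (M.step r s) ↔ Viol s)

end Sys

namespace Sys

variable {S T R : Type}

def RespectsDepOrder (D : R → R → Prop) (w u : List R) : Prop :=
  ∀ a b, D a b → List.Sublist [a, b] u → b ∈ w → List.Sublist [a, b] w

namespace RespectsDepOrder

variable {D : R → R → Prop}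

theorem forall_not_dep_of_cons {r : R} {w p q : List R}
    (h : RespectsDepOrder D (r :: w) (p ++ r :: q)) (hrw : r ∉ w) :
    ∀ a ∈ p, ¬ D a r := by
  intro a ha hdep
  have hsub : List.Sublist [a, r] (r :: w) :=
    h a r hdep ((List.singleton_sublist.mpr ha).append (List.singleton_sublist.mpr (by simp)))
      (by simp)
  rcases List.sublist_cons_iff.mp hsub with hsub | ⟨_, heq, hsub⟩
  · exact hrw (hsub.subset (by simp))
  · obtain ⟨-, rfl⟩ := List.cons_eq_cons.mp heq
    exact hrw (hsub.subset (by simp))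

theorem of_cons {r : R} {w u u' : List R} (h : RespectsDepOrder D (r :: w) u)
    (hu' : u'.Sublist u) (hru' : r ∉ u') : RespectsDepOrder D w u' := by
  intro a b hdep hsub hbw
  rcases List.sublist_cons_iff.mp (h a b hdep (hsub.trans hu') (by simp [hbw])) with
    hsub' | ⟨_, heq, -⟩
  · exact hsub'
  · obtain ⟨rfl, -⟩ := List.cons_eq_cons.mp heq
    exact absurd (hsub.subset (by simp)) hru'

end RespectsDepOrder

theorem DepCovering.respectsDepOrder {M : Sys S T R} {D : R → R → Prop} (hwf : M.Wf)
    {s sn sm : S} {w u : List R} (hu : M.DepCovering D s w sn u sm) :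
    RespectsDepOrder D w u := by
  intro a b hdep hsub hbw
  have hb : ¬ M.inNext sn b := (hwf s w sn hu.1).2 b hbw
  rcases hu.2.2.2 a b hdep hsub with h | ⟨-, h⟩ | ⟨-, h, -⟩ | ⟨h, -⟩
  · exact h
  · exact absurd h hb
  · exact absurd h hb
  · exact absurd hbw h

namespace ValidDep

variable {M : Sys S T R} {D : R → R → Prop}

theorem diamond (hD : M.ValidDep D) {a r : R} {s : S} (hDar : ¬ D a r)
    (ha : M.enabled a s) (hr : M.enabled r (M.step a s)) :
    M.enabled r s ∧ M.enabled a (M.step r s) ∧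
      M.step r (M.step a s) = M.step a (M.step r s) := by
  have hrs : M.enabled r s := ((hD.2.2 a r hDar s ha).2.1).mpr hr
  have hDra : ¬ D r a := fun h => hDar (hD.2.1 r a h)
  exact ⟨hrs, ((hD.2.2 r a hDra s hrs).2.1).mp ha, (hD.2.2 a r hDar s ha).2.2 hrs⟩

theorem seq_cons_append (hD : M.ValidDep D) {r : R} {q : List R} :
    ∀ {p : List R} {s v : S}, M.Seq s (p ++ r :: q) v → (∀ a ∈ p, ¬ D a r) →
      M.Seq s (r :: (p ++ q)) v
  | [], _, _, h, _ => h
  | a :: p, s, v, .cons ha h, hp => by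
    cases seq_cons_append hD h fun b hb => hp b (by simp [hb]) with
    | cons hr h' =>
      obtain ⟨hrs, har, hcomm⟩ := hD.diamond (hp a (by simp)) ha hr
      exact .cons hrs (.cons har (hcomm ▸ h'))

theorem exists_seq_of_respectsDepOrder (hD : M.ValidDep D) :
    ∀ {w u : List R} {s sn v : S}, M.Seq s w sn → M.Seq s u v → w.Nodup → u.Nodup →
      w ⊆ u → RespectsDepOrder D w u → ∃ e, M.Seq sn e v ∧ ∀ x ∈ e, x ∈ u ∧ x ∉ w
  | [], u, _, _, _, .nil _, hu, _, _, _, _ => ⟨u, hu, fun _ hx => ⟨hx, List.not_mem_nil⟩⟩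
  | r :: w, _, _, _, _, .cons _ hw, hu, hwnd, hund, hsub, hord => by
    obtain ⟨hrw, hwnd⟩ := List.nodup_cons.mp hwnd
    obtain ⟨p, q, rfl⟩ := List.append_of_mem (hsub List.mem_cons_self)
    have hrpq : r ∉ p ++ q := (List.nodup_cons.mp (List.nodup_middle.mp hund)).1
    have hpq : (p ++ q).Sublist (p ++ r :: q) := (List.sublist_cons_self r q).append_left p
    have hwpq : w ⊆ p ++ q := fun b hb => by
      have hbr : b ≠ r := fun h => hrw (h ▸ hb)
      simpa [hbr] using hsub (List.mem_cons_of_mem r hb)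
    cases hD.seq_cons_append hu (hord.forall_not_dep_of_cons hrw) with
    | cons _ hu' =>
      obtain ⟨e, he, hmem⟩ := exists_seq_of_respectsDepOrder hD hw hu' hwnd
        (hund.sublist hpq) hwpq (hord.of_cons hpq hrpq)
      refine ⟨e, he, fun x hx => ⟨hpq.subset (hmem x hx).1, ?_⟩⟩
      rintro (_ | ⟨_, hxw⟩)
      · exact hrpq (hmem r hx).1
      · exact (hmem x hx).2 hxw

end ValidDep

theorem IsAssertion.viol_iff_of_seq {M : Sys S T R} {D : R → R → Prop} {α : R}
    {Viol : S → Prop} (hα : M.IsAssertion D α Viol) :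
    ∀ {e : List R} {s v : S}, M.Seq s e v → (∀ x ∈ e, ¬ D x α) → (Viol v ↔ Viol s)
  | [], _, _, .nil _, _ => Iff.rfl
  | x :: _, s, _, .cons hx he, hind =>
    (viol_iff_of_seq hα he fun y hy => hind y (List.mem_cons_of_mem x hy)).trans
      (hα.2 x s (hind x List.mem_cons_self) hx)

end Sys

theorem assertion_violation_in_dependence_covering_sequence_general
    {S T R : Type} (M : Sys S T R) (D : R → R → Prop)
    (hD : M.ValidDep D) (hwf : M.Wf)
    {α : R} {Viol : S → Prop} (hα : M.IsAssertion D α Viol)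
    {s sn sm : S} {w u : List R}
    (hviol : Viol sn)
    (hu : M.DepCovering D s w sn u sm)
    (hnew : ∀ r ∈ u, r ∉ w → ¬ D r α) :
    ∃ u₁ v', u₁ <+: u ∧ M.Seq s u₁ v' ∧ Viol v' := by
  have hord := hu.respectsDepOrder hwf
  obtain ⟨hw, hus, hsub, -⟩ := hu
  obtain ⟨e, he, hmem⟩ := hD.exists_seq_of_respectsDepOrder hw hus (hwf s w sn hw).1
    (hwf s u sm hus).1 hsub hord
  have hviol_sm : Viol sm :=
    (hα.viol_iff_of_seq he fun x hx => hnew x (hmem x hx).1 (hmem x hx).2).mpr hviol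
  exact ⟨u, sm, List.prefix_refl u, hus, hviol_sm⟩

/-- If `w` reaches a state violating a local assertion and `u`
is a dependence-covering sequence of `w` whose new transitions are all
independent of the assertion, then some prefix of `u` reaches a violating
state. -/
theorem assertion_violation_in_dependence_covering_sequence
    {S T R : Type} (M : Sys S T R) (D : R → R → Prop)
    (hD : M.ValidDep D) (hwf : M.Wf)
    {α : R} {Viol : S → Prop} (hα : M.IsAssertion D α Viol)
    {s sn sm : S} {w u : List R}
    (hw : M.Seq s w sn) (hviol : Viol sn)
    (hu : M.DepCovering D s w sn u sm)
    (hnew : ∀ r ∈ u, r ∉ w → ¬ D r α) :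
    ∃ u₁ v', u₁ <+: u ∧ M.Seq s u₁ v' ∧ Viol v' :=
  assertion_violation_in_dependence_covering_sequence_general M D hD hwf hα hviol hu hnew
end

section
/- Let r and r' be transitions belonging to two distinct tasks that execute on the same thread. Suppose p_i, …, p₁ and q_i, …, q₁ are post transitions such that: p₁ posts the task of r and q₁ posts the task of r'; for each 1 ≤ j < i, p_{j+1} posts the task of p_j and q_{j+1} posts the task of q_j; for each 1 ≤ j ≤ i, dest p_j = dest q_j (at every level the two chains post to the same destination thread); for each 1 ≤ j < i the tasks of p_j and q_j are distinct; and p_i and q_i execute on different threads (they are the diverging posts of r and r'). Then in every transition sequence w in which r, r', and all of p₁, …, p_i, q₁, …, q_i occur, r occurs before r' if and only if p_i occurs before q_i: the order of execution of the diverging posts uniquely determines the order of execution of r and r'. -/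
/-- An event-driven multi-threaded program with tasks (event-handler
instances): each transition belongs to a task, all transitions of one task
execute on one thread, and each post transition designates a posted task whose
transitions all execute on the destination thread of the post. -/
structure ESys (S T R τ : Type) extends Sys S T R where
  task : R → τ
  taskThread : τ → T
  thread_eq : ∀ r, thread r = taskThread (task r)
  isPost : R → Prop
  posted : R → τ
  dest : R → T
  posted_thread : ∀ p, isPost p → taskThread (posted p) = dest p

namespace ESys

variable {S T R τ : Type}

/-- Posted tasks are handled atomically and in FIFO order: if posts `a` and `b`
to the same destination thread (posting distinct tasks) occur in a transition
sequence with `a` before `b`, then every transition of the task posted by `a`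
occurring in the sequence precedes every transition of the task posted by `b`
occurring in the sequence. -/
def FIFO (E : ESys S T R τ) : Prop :=
  ∀ s w s', E.toSys.Seq s w s' →
    ∀ a b, E.isPost a → E.isPost b → E.dest a = E.dest b →
      E.posted a ≠ E.posted b → List.Sublist [a, b] w →
      ∀ x y, E.task x = E.posted a → E.task y = E.posted b →
        x ∈ w → y ∈ w → List.Sublist [x, y] w

end ESys

/-!
FIFO handling transfers the order of two posts to the same thread onto the transitions of the
(distinct) tasks they post. Descending the two post chains level by level, the order of the
diverging posts is therefore inherited by `r` and `r'`. Applied to both possible orders of the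
diverging posts, and since the transitions of a sequence are distinct and totally ordered by
position, this gives the equivalence.
-/

namespace List

variable {α : Type*} {x y : α} {l : List α}

theorem pair_sublist_or_pair_sublist_swap (hx : x ∈ l) (hy : y ∈ l) (hne : x ≠ y) :
    [x, y] <+ l ∨ [y, x] <+ l := by
  obtain ⟨s, t, rfl⟩ := append_of_mem hx
  rcases mem_append.mp hy with hys | hyt
  · exact .inr <| (singleton_sublist.mpr hys).append (cons_sublist_cons.mpr (nil_sublist t))
  · rcases mem_cons.mp hyt with rfl | hyt
    · exact absurd rfl hne
    · exact .inl <| (cons_sublist_cons.mpr (singleton_sublist.mpr hyt)).trans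
        (sublist_append_right s _)

theorem Nodup.not_pair_sublist_swap (hl : l.Nodup) (h : [x, y] <+ l) : ¬ [y, x] <+ l := by
  induction l with
  | nil => simp at h
  | cons z t ih =>
    rw [nodup_cons] at hl
    grind

end List

namespace ESys

variable {S T R τ : Type} {E : ESys S T R τ} {s s' : S} {w : List R}

theorem FIFO.pair_sublist_of_posts (hfifo : E.FIFO) (hw : E.toSys.Seq s w s')
    {a b x y : R} (ha : E.isPost a) (hb : E.isPost b) (hab : E.dest a = E.dest b)
    (hx : E.task x = E.posted a) (hy : E.task y = E.posted b) (hxy : E.task x ≠ E.task y)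
    (hxw : x ∈ w) (hyw : y ∈ w) (hsub : List.Sublist [a, b] w) :
    List.Sublist [x, y] w :=
  hfifo s w s' hw a b ha hb hab (hx ▸ hy ▸ hxy) hsub x y hx hy hxw hyw

theorem FIFO.pair_sublist_of_post_chains (hfifo : E.FIFO) (hw : E.toSys.Seq s w s')
    {r r' : R} (htk : E.task r ≠ E.task r') (hrw : r ∈ w) (hr'w : r' ∈ w)
    {i : ℕ} (hi : 0 < i) {p q : Fin i → R}
    (hp : ∀ j, E.isPost (p j)) (hq : ∀ j, E.isPost (q j))
    (hp0 : E.posted (p ⟨0, hi⟩) = E.task r) (hq0 : E.posted (q ⟨0, hi⟩) = E.task r')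
    (hpchain : ∀ (j : ℕ) (h : j + 1 < i),
      E.posted (p ⟨j + 1, h⟩) = E.task (p ⟨j, Nat.lt_of_succ_lt h⟩))
    (hqchain : ∀ (j : ℕ) (h : j + 1 < i),
      E.posted (q ⟨j + 1, h⟩) = E.task (q ⟨j, Nat.lt_of_succ_lt h⟩))
    (hdest : ∀ j, E.dest (p j) = E.dest (q j))
    (hdistinct : ∀ (j : ℕ) (h : j + 1 < i),
      E.task (p ⟨j, Nat.lt_of_succ_lt h⟩) ≠ E.task (q ⟨j, Nat.lt_of_succ_lt h⟩))
    (hpw : ∀ j, p j ∈ w) (hqw : ∀ j, q j ∈ w) :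
    ∀ (j : ℕ) (hj : j < i), List.Sublist [p ⟨j, hj⟩, q ⟨j, hj⟩] w → List.Sublist [r, r'] w
  | 0, _, hsub =>
    hfifo.pair_sublist_of_posts hw (hp _) (hq _) (hdest _) hp0.symm hq0.symm htk hrw hr'w hsub
  | j + 1, hj, hsub =>
    pair_sublist_of_post_chains hfifo hw htk hrw hr'w hi hp hq hp0 hq0 hpchain hqchain hdest
      hdistinct hpw hqw j (Nat.lt_of_succ_lt hj) <|
      hfifo.pair_sublist_of_posts hw (hp _) (hq _) (hdest _) (hpchain j hj).symm
        (hqchain j hj).symm (hdistinct j hj) (hpw _) (hqw _) hsub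

end ESys

/-- The order of execution of the diverging posts of `r` and
`r'` uniquely determines the order of execution of `r` and `r'`. -/
theorem diverging_posts_determine_order
    {S T R τ : Type} (E : ESys S T R τ) (hfifo : E.FIFO) (hwf : E.toSys.Wf)
    {r r' : R}
    (htk : E.task r ≠ E.task r')
    {i : ℕ} (hi : 0 < i) (p q : Fin i → R)
    (hpost : ∀ j, E.isPost (p j) ∧ E.isPost (q j))
    (hp0 : E.posted (p ⟨0, hi⟩) = E.task r)
    (hq0 : E.posted (q ⟨0, hi⟩) = E.task r')
    (hpchain : ∀ (j : ℕ) (h : j + 1 < i),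
      E.posted (p ⟨j + 1, h⟩) = E.task (p ⟨j, by omega⟩))
    (hqchain : ∀ (j : ℕ) (h : j + 1 < i),
      E.posted (q ⟨j + 1, h⟩) = E.task (q ⟨j, by omega⟩))
    (hdest : ∀ j, E.dest (p j) = E.dest (q j))
    (hdistinct : ∀ (j : ℕ) (h : j + 1 < i),
      E.task (p ⟨j, by omega⟩) ≠ E.task (q ⟨j, by omega⟩))
    (hdiv : E.toSys.thread (p ⟨i - 1, by omega⟩) ≠ E.toSys.thread (q ⟨i - 1, by omega⟩))
    {s s' : S} {w : List R} (hw : E.toSys.Seq s w s')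
    (hrin : r ∈ w) (hr'in : r' ∈ w)
    (hall : ∀ j, p j ∈ w ∧ q j ∈ w) :
    (List.Sublist [r, r'] w ↔
      List.Sublist [p ⟨i - 1, by omega⟩, q ⟨i - 1, by omega⟩] w) := by
  have hnd := (hwf s w s' hw).1
  have hrr' : r ≠ r' := fun h => htk (congrArg E.task h)
  have hpq : p ⟨i - 1, by omega⟩ ≠ q ⟨i - 1, by omega⟩ := fun h => hdiv (congrArg _ h)
  have hpw j := (hall j).1
  have hqw j := (hall j).2
  have hfwd := hfifo.pair_sublist_of_post_chains hw htk hrin hr'in hi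
    (fun j => (hpost j).1) (fun j => (hpost j).2) hp0 hq0 hpchain hqchain hdest hdistinct
    hpw hqw (i - 1) (by omega)
  have hbwd := hfifo.pair_sublist_of_post_chains hw htk.symm hr'in hrin hi
    (fun j => (hpost j).2) (fun j => (hpost j).1) hq0 hp0 hqchain hpchain
    (fun j => (hdest j).symm) (fun j h => (hdistinct j h).symm) hqw hpw (i - 1) (by omega)
  refine ⟨fun hrr => ?_, hfwd⟩
  exact (List.pair_sublist_or_pair_sublist_swap (hpw _) (hqw _) hpq).resolve_right
    fun hqp => hnd.not_pair_sublist_swap hrr (hbwd hqp)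
end
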